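/- Let R = τ be the transposition YBO on a k-module V. Then every 2-cochain φ : V ⊗ V → V ⊗ V is a Yang-Baxter 2-cocycle, i.e., δ²(φ) = (R⊗1)(1⊗R)(φ⊗1) + (R⊗1)(1⊗φ)(R⊗1) + (φ⊗1)(1⊗R)(R⊗1) − (1⊗R)(R⊗1)(1⊗φ) − (1⊗R)(φ⊗1)(1⊗R) − (1⊗φ)(R⊗1)(1⊗R) = 0. -/
import Mathlib


open TensorProduct

/-- `R ⊗ 1` acting on `(V ⊗ V) ⊗ V`. -/
noncomputable def sig1 (k : Type*) [CommRing k] (V : Type*) [AddCommGroup V] [Module k V]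
    (R : V ⊗[k] V →ₗ[k] V ⊗[k] V) :
    (V ⊗[k] V) ⊗[k] V →ₗ[k] (V ⊗[k] V) ⊗[k] V :=
  LinearMap.rTensor V R

/-- `1 ⊗ R` acting on `(V ⊗ V) ⊗ V`. -/
noncomputable def sig2 (k : Type*) [CommRing k] (V : Type*) [AddCommGroup V] [Module k V]
    (R : V ⊗[k] V →ₗ[k] V ⊗[k] V) :
    (V ⊗[k] V) ⊗[k] V →ₗ[k] (V ⊗[k] V) ⊗[k] V :=
  (TensorProduct.assoc k V V V).symm.toLinearMap ∘ₗ LinearMap.lTensor V R ∘ₗ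
    (TensorProduct.assoc k V V V).toLinearMap

/-- The Yang-Baxter 2-differential of the 2-cochain `φ` with respect to the operator `R`. -/
noncomputable def ybDelta2 (k : Type*) [CommRing k] (V : Type*) [AddCommGroup V] [Module k V]
    (R φ : V ⊗[k] V →ₗ[k] V ⊗[k] V) :
    (V ⊗[k] V) ⊗[k] V →ₗ[k] (V ⊗[k] V) ⊗[k] V :=
  sig1 k V R ∘ₗ sig2 k V R ∘ₗ sig1 k V φ
    + sig1 k V R ∘ₗ sig2 k V φ ∘ₗ sig1 k V R
    + sig1 k V φ ∘ₗ sig2 k V R ∘ₗ sig1 k V R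
    - sig2 k V R ∘ₗ sig1 k V R ∘ₗ sig2 k V φ
    - sig2 k V R ∘ₗ sig1 k V φ ∘ₗ sig2 k V R
    - sig2 k V φ ∘ₗ sig1 k V R ∘ₗ sig2 k V R


lemma auxA {k : Type*} [CommRing k] {V : Type*} [AddCommGroup V] [Module k V]
    (t : V ⊗[k] V) (z : V) :
    sig1 k V (TensorProduct.comm k V V).toLinearMap
      (sig2 k V (TensorProduct.comm k V V).toLinearMap (t ⊗ₜ z)) =
      (TensorProduct.assoc k V V V).symm (z ⊗ₜ t) := by
  induction t using TensorProduct.induction_on with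
  | zero => simp [sig1, sig2]
  | tmul a b => simp [sig1, sig2]
  | add s t hs ht =>
      simp only [TensorProduct.add_tmul, TensorProduct.tmul_add, map_add, hs, ht]

lemma auxB {k : Type*} [CommRing k] {V : Type*} [AddCommGroup V] [Module k V]
    (t : V ⊗[k] V) (z : V) :
    sig2 k V (TensorProduct.comm k V V).toLinearMap
      (sig1 k V (TensorProduct.comm k V V).toLinearMap
        ((TensorProduct.assoc k V V V).symm (z ⊗ₜ t))) = t ⊗ₜ z := by
  induction t using TensorProduct.induction_on with
  | zero => simp [sig1, sig2]
  | tmul a b => simp [sig1, sig2]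
  | add s t hs ht =>
      simp only [TensorProduct.add_tmul, TensorProduct.tmul_add, map_add, hs, ht]

lemma auxC {k : Type*} [CommRing k] {V : Type*} [AddCommGroup V] [Module k V]
    (t : V ⊗[k] V) (y : V) :
    sig1 k V (TensorProduct.comm k V V).toLinearMap
      ((TensorProduct.assoc k V V V).symm (y ⊗ₜ t)) =
      sig2 k V (TensorProduct.comm k V V).toLinearMap (t ⊗ₜ y) := by
  induction t using TensorProduct.induction_on with
  | zero => simp [sig1, sig2]
  | tmul a b => simp [sig1, sig2]
  | add s t hs ht =>
      simp only [TensorProduct.add_tmul, TensorProduct.tmul_add, map_add, hs, ht]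

/-- For `R = τ` the transposition, every 2-cochain is a Yang-Baxter 2-cocycle. -/
theorem every_two_cochain_is_cocycle_for_transposition (k : Type*) [CommRing k] (V : Type*)
    [AddCommGroup V] [Module k V] (φ : V ⊗[k] V →ₗ[k] V ⊗[k] V) :
    ybDelta2 k V (TensorProduct.comm k V V).toLinearMap φ = 0 := by
  refine TensorProduct.ext_threefold fun x y z => ?_
  have hs1 : ∀ a b c : V, sig1 k V φ ((a ⊗ₜ[k] b) ⊗ₜ[k] c) = φ (a ⊗ₜ b) ⊗ₜ c := by
    intro a b c; simp [sig1]
  have hs2 : ∀ a b c : V, sig2 k V φ ((a ⊗ₜ[k] b) ⊗ₜ[k] c)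
      = (TensorProduct.assoc k V V V).symm (a ⊗ₜ φ (b ⊗ₜ c)) := by
    intro a b c; simp [sig2]
  have hR1 : ∀ a b c : V, sig1 k V (TensorProduct.comm k V V).toLinearMap ((a ⊗ₜ[k] b) ⊗ₜ[k] c)
      = (b ⊗ₜ a) ⊗ₜ c := by intro a b c; simp [sig1]
  have hR2 : ∀ a b c : V, sig2 k V (TensorProduct.comm k V V).toLinearMap ((a ⊗ₜ[k] b) ⊗ₜ[k] c)
      = (a ⊗ₜ c) ⊗ₜ b := by intro a b c; simp [sig2]
  simp only [ybDelta2, LinearMap.sub_apply, LinearMap.add_apply, LinearMap.comp_apply,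
    LinearMap.zero_apply, hR1, hR2, hs1, hs2]
  rw [auxA, auxC, auxB]
  abel
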